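/- arXiv:0907.5079 — 2 statements merged into one kernel-verified Lean document; each statement's English description precedes it below -/
import Mathlib

section
/- Let T be a finite connected graph with at least one edge, let S be a spanning tree of T, and for each edge e of T not in S let the length of the cycle consisting of e together with the simple path in S joining its endpoints be recorded; let L be the set of these lengths. Let Γ be a group acting on the left on a finite graph G by graph automorphisms, and assume that for every vertex v of G, every nonidentity γ ∈ Γ, and every l ∈ L ∪ {4}, there is no walk of length l in G from v to γ·v. Then: (a) the induced Γ-action on the poset Hom(T,G), given by (γ·α)(u) = γ·α(u), is free and strongly regular; (b) the order-preserving map p_T : Hom(T,G) → Hom(T, G/Γ) induced by the quotient homomorphism p : G → G/Γ preserves rank, where rank(α) = Σ_{u ∈ V(T)} (|α(u)| − 1); and (c) p_T is surjective, p_T(α) = p_T(β) holds iff β = γ·α for some γ ∈ Γ, and p_T(α) ≤ p_T(β) holds iff γ·α ≤ β for some γ ∈ Γ; consequently p_T induces an isomorphism of posets from the quotient Hom(T,G)/Γ onto Hom(T, G/Γ). -/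
/-- A graph: a vertex set with a symmetric adjacency relation (loops allowed). -/
structure SymmGraph (V : Type) where
  Adj : V → V → Prop
  symm : ∀ x y, Adj x y → Adj y x

/-- Multihomomorphisms from `G` to `H`. -/
def SymmGraph.IsMultiHom {V W : Type} (G : SymmGraph V) (H : SymmGraph W) (α : V → Set W) : Prop :=
  (∀ v, (α v).Nonempty) ∧ ∀ v w, G.Adj v w → ∀ x ∈ α v, ∀ y ∈ α w, H.Adj x y

/-- The Hom poset `Hom(G,H)`. -/
def HomPoset {V W : Type} (G : SymmGraph V) (H : SymmGraph W) : Type :=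
  {α : V → Set W // G.IsMultiHom H α}

instance {V W : Type} (G : SymmGraph V) (H : SymmGraph W) : PartialOrder (HomPoset G H) :=
  Subtype.partialOrder _

/-- A walk of length `l` from `v` to `w`. -/
def SymmGraph.HasWalk {V : Type} (G : SymmGraph V) (l : ℕ) (v w : V) : Prop :=
  ∃ f : ℕ → V, f 0 = v ∧ f l = w ∧ ∀ i < l, G.Adj (f i) (f (i + 1))

section Quot

variable {Γ VG : Type} [Group Γ] [MulAction Γ VG]

/-- The orbit relation of a `Γ`-action. -/
def orbRel (Γ : Type) [Group Γ] (VG : Type) [MulAction Γ VG] (v w : VG) : Prop :=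
  ∃ γ : Γ, w = γ • v

/-- The quotient graph `G/Γ`: vertices are orbits, two orbits are adjacent iff they
contain adjacent representatives. -/
def quotGraph (G : SymmGraph VG) (Γ : Type) [Group Γ] [MulAction Γ VG] :
    SymmGraph (Quot (orbRel Γ VG)) where
  Adj X Y := ∃ v w, Quot.mk _ v = X ∧ Quot.mk _ w = Y ∧ G.Adj v w
  symm X Y h := by
    obtain ⟨v, w, hv, hw, hvw⟩ := h
    exact ⟨w, v, hw, hv, G.symm _ _ hvw⟩

/-- The map `p_T : Hom(T,G) → Hom(T, G/Γ)` induced by the quotient homomorphism. -/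
def quotHom {VT : Type} (T : SymmGraph VT) (G : SymmGraph VG) (Γ : Type) [Group Γ] [MulAction Γ VG]
    (α : HomPoset T G) : HomPoset T (quotGraph G Γ) :=
  ⟨fun u => Quot.mk (orbRel Γ VG) '' α.1 u,
   ⟨fun u => (α.2.1 u).image _,
    fun v w hvw x hx y hy => by
      obtain ⟨a, ha, rfl⟩ := hx
      obtain ⟨b, hb, rfl⟩ := hy
      exact ⟨a, b, rfl, rfl, α.2.2 v w hvw a ha b hb⟩⟩⟩

/-- The action of `γ ∈ Γ` on `Hom(T,G)`, `(γ·α)(u) = γ·α(u)`. -/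
def homActG {VT : Type} (T : SymmGraph VT) (G : SymmGraph VG) [Group Γ] [MulAction Γ VG]
    (hGadj : ∀ (γ : Γ) v w, G.Adj v w → G.Adj (γ • v) (γ • w))
    (γ : Γ) (α : HomPoset T G) : HomPoset T G :=
  ⟨fun u => (γ • ·) '' α.1 u,
   ⟨fun u => (α.2.1 u).image _,
    fun v w hvw x hx y hy => by
      obtain ⟨a, ha, rfl⟩ := hx
      obtain ⟨b, hb, rfl⟩ := hy
      exact hGadj γ _ _ (α.2.2 v w hvw a ha b hb)⟩⟩

/-- The rank of a multihomomorphism. -/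
noncomputable def homRank {VT : Type} [Fintype VT] (T : SymmGraph VT) {W : Type} (H : SymmGraph W)
    (α : HomPoset T H) : ℕ :=
  ∑ u : VT, ((α.1 u).ncard - 1)

end Quot

/-! The length-4 condition says that two distinct points of an orbit are never joined by a walk
of length 3 followed by an edge; in particular they have no common neighbour. Hence the quotient
map is injective on every `α u`, and a lift of an element of `Hom(T, G/Γ)` is determined up to
`Γ` by its value at one vertex, from which it propagates along the edges of the connected graph
`T`. This gives freeness, strong regularity, rank preservation and the description of the fibres
and of the order. For surjectivity, lift a section of `β` along the spanning tree `S`; an edge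
of `T` outside `S` closes a fundamental cycle, and the condition on its length forces the lift to
be a homomorphism on all of `T`. The length-4 condition then lets one take, at each vertex, all
lifts adjacent to this base lift at the neighbours. -/

section Orbits

variable {Γ VG : Type} [Group Γ] [MulAction Γ VG]

lemma orbRel_equivalence : Equivalence (orbRel Γ VG) where
  refl x := ⟨1, (one_smul Γ x).symm⟩
  symm := by rintro x y ⟨γ, rfl⟩; exact ⟨γ⁻¹, (inv_smul_smul γ x).symm⟩
  trans := by rintro x y z ⟨γ, rfl⟩ ⟨δ, rfl⟩; exact ⟨δ * γ, (mul_smul δ γ x).symm⟩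

lemma quot_mk_eq_quot_mk_iff {a b : VG} :
    Quot.mk (orbRel Γ VG) a = Quot.mk (orbRel Γ VG) b ↔ ∃ γ : Γ, b = γ • a := by
  rw [Quot.eq, orbRel_equivalence.eqvGen_iff]
  rfl

@[simp]
lemma quot_mk_smul (γ : Γ) (a : VG) :
    Quot.mk (orbRel Γ VG) (γ • a) = Quot.mk (orbRel Γ VG) a :=
  quot_mk_eq_quot_mk_iff.mpr ⟨γ⁻¹, (inv_smul_smul γ a).symm⟩

variable {G : SymmGraph VG}

lemma exists_adj_of_quotGraph_adj (hGadj : ∀ (γ : Γ) v w, G.Adj v w → G.Adj (γ • v) (γ • w))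
    {v : VG} {Y : Quot (orbRel Γ VG)} (h : (quotGraph G Γ).Adj (Quot.mk _ v) Y) :
    ∃ y, Quot.mk (orbRel Γ VG) y = Y ∧ G.Adj v y := by
  obtain ⟨v', w', hv', rfl, hvw⟩ := h
  obtain ⟨δ, rfl⟩ := quot_mk_eq_quot_mk_iff.mp hv'
  exact ⟨δ • w', quot_mk_smul δ w', hGadj δ _ _ hvw⟩

lemma exists_adj_smul_of_quotGraph_adj
    (hGadj : ∀ (γ : Γ) v w, G.Adj v w → G.Adj (γ • v) (γ • w)) {v w : VG}
    (h : (quotGraph G Γ).Adj (Quot.mk _ v) (Quot.mk _ w)) : ∃ γ : Γ, G.Adj v (γ • w) := by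
  obtain ⟨y, hy, hvy⟩ := exists_adj_of_quotGraph_adj hGadj h
  obtain ⟨γ, rfl⟩ := quot_mk_eq_quot_mk_iff.mp hy.symm
  exact ⟨γ, hvy⟩

end Orbits

namespace SymmGraph

variable {V : Type} {G : SymmGraph V}

lemma hasWalk_zero (v : V) : G.HasWalk 0 v v :=
  ⟨fun _ => v, rfl, rfl, fun _ h => absurd h (Nat.not_lt_zero _)⟩

lemma HasWalk.concat {k : ℕ} {v w z : V} (h : G.HasWalk k v w) (ha : G.Adj w z) :
    G.HasWalk (k + 1) v z := by
  obtain ⟨f, rfl, rfl, hf⟩ := h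
  refine ⟨fun i => if i ≤ k then f i else z, by simp, by simp, fun i hi => ?_⟩
  rcases Nat.lt_or_eq_of_le (Nat.lt_succ_iff.mp hi) with hik | rfl
  · simpa [hik.le, Nat.succ_le_of_lt hik] using hf i hik
  · simpa using ha

lemma HasWalk.reflTransGen {l : ℕ} {v w : V} (h : G.HasWalk l v w) :
    Relation.ReflTransGen G.Adj v w := by
  induction l generalizing w with
  | zero => obtain ⟨f, rfl, rfl, -⟩ := h; rfl
  | succ l ih =>
    obtain ⟨f, rfl, rfl, hf⟩ := h
    exact (ih ⟨f, rfl, rfl, fun i hi => hf i (by omega)⟩).tail (hf l l.lt_succ_self)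

lemma hasWalk_length_of_walk {VT : Type} {S : SimpleGraph VT} {b : VT → V}
    (hb : ∀ u w, S.Adj u w → G.Adj (b u) (b w)) {a c : VT} (p : S.Walk a c) :
    G.HasWalk p.length (b a) (b c) :=
  ⟨fun i => b (p.getVert i), by simp, by simp, fun _ hi => hb _ _ (p.adj_getVert_succ hi)⟩

def NoOrbitWalk (G : SymmGraph V) (Γ : Type) [Group Γ] [MulAction Γ V] (l : ℕ) : Prop :=
  ∀ (v : V) (γ : Γ), G.HasWalk l v (γ • v) → γ = 1

variable {Γ : Type} [Group Γ] [MulAction Γ V]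

lemma NoOrbitWalk.eq_one_of_hasWalk_of_adj {k : ℕ} (h : G.NoOrbitWalk Γ (k + 1)) {x y : V}
    {γ : Γ} (hw : G.HasWalk k x y) (hy : G.Adj y (γ • x)) : γ = 1 :=
  h x γ (hw.concat hy)

lemma NoOrbitWalk.eq_one_of_adj_of_adj_of_adj (h : G.NoOrbitWalk Γ 4) {x y z w : V} {γ : Γ}
    (hxy : G.Adj x y) (hyz : G.Adj y z) (hzw : G.Adj z w) (hw : G.Adj w (γ • x)) : γ = 1 :=
  h.eq_one_of_hasWalk_of_adj (((hasWalk_zero x).concat hxy).concat hyz |>.concat hzw) hw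

lemma NoOrbitWalk.eq_one_of_adj_of_adj_smul (h : G.NoOrbitWalk Γ 4) {v y : V} {γ : Γ}
    (hy : G.Adj v y) (hγy : G.Adj v (γ • y)) : γ = 1 :=
  h.eq_one_of_adj_of_adj_of_adj (G.symm _ _ hy) hy (G.symm _ _ hy) hγy

end SymmGraph

namespace SimpleGraph

variable {VT V : Type} {S : SimpleGraph VT}

noncomputable def Walk.liftAlong (step : V → VT → V) : {a c : VT} → V → S.Walk a c → V
  | _, _, x, .nil => x
  | _, _, x, .cons (v := b) _ p => p.liftAlong step (step x b)

lemma Walk.liftAlong_concat (step : V → VT → V) {a b c : VT} (x : V) (p : S.Walk a b)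
    (h : S.Adj b c) : (p.concat h).liftAlong step x = step (p.liftAlong step x) c := by
  induction p generalizing x with
  | nil => rfl
  | cons _ p ih => exact ih _ h

lemma Walk.liftAlong_spec {W : Type} (π : V → W) (f : VT → W) (step : V → VT → V)
    (hstep : ∀ x u w, S.Adj u w → π x = f u → π (step x w) = f w) {a c : VT} (x : V)
    (hx : π x = f a) (p : S.Walk a c) : π (p.liftAlong step x) = f c := by
  induction p generalizing x with
  | nil => exact hx
  | cons h p ih => exact ih _ (hstep x _ _ h hx)

theorem IsTree.exists_lift {W : Type} (hS : S.IsTree) (G : SymmGraph V) (H : SymmGraph W)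
    (π : V → W) (hπ : Function.Surjective π)
    (hlift : ∀ v Y, H.Adj (π v) Y → ∃ y, π y = Y ∧ G.Adj v y)
    (f : VT → W) (hf : ∀ u w, S.Adj u w → H.Adj (f u) (f w)) :
    ∃ b : VT → V, (∀ u, π (b u) = f u) ∧ ∀ u w, S.Adj u w → G.Adj (b u) (b w) := by
  classical
  obtain ⟨r⟩ := hS.connected.nonempty
  obtain ⟨x₀, hx₀⟩ := hπ (f r)
  let step : V → VT → V := fun x w => if h : ∃ y, π y = f w ∧ G.Adj x y then h.choose else x
  have hstep : ∀ x u w, S.Adj u w → π x = f u → π (step x w) = f w ∧ G.Adj x (step x w) := by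
    intro x u w huw hx
    have hex := hlift x (f w) (hx ▸ hf u w huw)
    simpa only [step, dif_pos hex] using hex.choose_spec
  let P : ∀ u, S.Walk r u := fun u => (hS.connected r u).some.toPath
  have hP : ∀ u, (P u).IsPath := fun u => (hS.connected r u).some.toPath.2
  have hπb : ∀ u, π ((P u).liftAlong step x₀) = f u := fun u =>
    Walk.liftAlong_spec π f step (fun x u w h hx => (hstep x u w h hx).1) x₀ hx₀ _
  refine ⟨fun u => (P u).liftAlong step x₀, hπb, fun u w huw => ?_⟩
  beta_reduce
  by_cases hu : u ∈ (P w).support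
  · rw [show P w = (P u).concat huw from hS.isAcyclic.path_concat (hP u) (hP w) huw hu,
      Walk.liftAlong_concat]
    exact (hstep _ u w huw (hπb u)).2
  · have hw : w ∈ (P u).support :=
      hS.isAcyclic.mem_support_of_ne_mem_support_of_adj_of_isPath (hP u) (hP w) huw hu
    rw [show P u = (P w).concat huw.symm from
      hS.isAcyclic.path_concat (hP w) (hP u) huw.symm hw, Walk.liftAlong_concat]
    exact G.symm _ _ (hstep _ w u huw.symm (hπb w)).2

end SimpleGraph

lemma SymmGraph.exists_adj_of_connected {V : Type} {T : SymmGraph V}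
    (hconn : ∀ a b : V, ∃ l, T.HasWalk l a b) (hedge : ∃ a b, T.Adj a b) (u : V) :
    ∃ w, T.Adj u w := by
  obtain ⟨a, b, hab⟩ := hedge
  obtain ⟨l, hl⟩ := hconn a u
  induction hl.reflTransGen with
  | refl => exact ⟨b, hab⟩
  | tail _ h _ => exact ⟨_, T.symm _ _ h⟩

section HomPoset

variable {Γ VT VG : Type} [Group Γ] [MulAction Γ VG] {T : SymmGraph VT} {G : SymmGraph VG}

lemma quotHom_mono {α β : HomPoset T G} (h : α ≤ β) : quotHom T G Γ α ≤ quotHom T G Γ β :=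
  fun u => Set.image_mono (h u)

lemma injOn_quot_mk (h4 : G.NoOrbitWalk Γ 4) (α : HomPoset T G) {u : VT}
    (hu : ∃ w, T.Adj u w) : Set.InjOn (Quot.mk (orbRel Γ VG)) (α.1 u) := by
  intro x hx x' hx' hxx'
  obtain ⟨γ, rfl⟩ := quot_mk_eq_quot_mk_iff.mp hxx'
  obtain ⟨w, hw⟩ := hu
  obtain ⟨y, hy⟩ := α.2.1 w
  rw [h4.eq_one_of_adj_of_adj_smul (α.2.2 w u (T.symm _ _ hw) y hy x hx)
    (α.2.2 w u (T.symm _ _ hw) y hy _ hx'), one_smul]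

lemma homRank_quotHom [Fintype VT] (h4 : G.NoOrbitWalk Γ 4) (hnbr : ∀ u, ∃ w, T.Adj u w)
    (α : HomPoset T G) : homRank T (quotGraph G Γ) (quotHom T G Γ α) = homRank T G α :=
  Finset.sum_congr rfl fun u _ => congrArg (· - 1) (injOn_quot_mk h4 α (hnbr u)).ncard_image

lemma smul_mem_of_quotHom_le (hGadj : ∀ (γ : Γ) v w, G.Adj v w → G.Adj (γ • v) (γ • w))
    (h4 : G.NoOrbitWalk Γ 4) {α β : HomPoset T G} (hle : quotHom T G Γ α ≤ quotHom T G Γ β)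
    {u w : VT} (huw : T.Adj u w) {x x' : VG} {γ : Γ} (hx : x ∈ α.1 u) (hγx : γ • x ∈ β.1 u)
    (hx' : x' ∈ α.1 w) : γ • x' ∈ β.1 w := by
  obtain ⟨y, hy, hyx'⟩ := hle w ⟨x', hx', rfl⟩
  obtain ⟨ε, rfl⟩ := quot_mk_eq_quot_mk_iff.mp ((quot_mk_smul γ x').trans hyx'.symm)
  rwa [h4.eq_one_of_adj_of_adj_smul (hGadj γ _ _ (α.2.2 u w huw x hx x' hx'))
    (β.2.2 u w huw _ hγx _ hy), one_smul] at hy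

section Action

variable (hGadj : ∀ (γ : Γ) v w, G.Adj v w → G.Adj (γ • v) (γ • w))

lemma homActG_mul (γ δ : Γ) (α : HomPoset T G) :
    homActG T G hGadj δ (homActG T G hGadj γ α) = homActG T G hGadj (δ * γ) α :=
  Subtype.ext <| funext fun u => by simp only [homActG, Set.image_image, mul_smul]

lemma homActG_one (α : HomPoset T G) : homActG T G hGadj 1 α = α :=
  Subtype.ext <| funext fun u => by simp only [homActG, one_smul, Set.image_id']

lemma homActG_mono (γ : Γ) {α β : HomPoset T G} (h : α ≤ β) :
    homActG T G hGadj γ α ≤ homActG T G hGadj γ β :=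
  fun u => Set.image_mono (h u)

lemma quotHom_homActG (γ : Γ) (α : HomPoset T G) :
    quotHom T G Γ (homActG T G hGadj γ α) = quotHom T G Γ α :=
  Subtype.ext <| funext fun u => by simp only [quotHom, homActG, Set.image_image, quot_mk_smul]

lemma eq_one_of_homActG_eq_of_le (h4 : G.NoOrbitWalk Γ 4) (hedge : ∃ a b, T.Adj a b)
    {α β μ : HomPoset T G} {γ : Γ} (hα : α ≤ μ) (hβ : β ≤ μ)
    (h : homActG T G hGadj γ α = β) : γ = 1 := by
  obtain ⟨a, b, hab⟩ := hedge
  obtain ⟨x, hx⟩ := α.2.1 a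
  obtain ⟨y, hy⟩ := μ.2.1 b
  have hγx : γ • x ∈ μ.1 a := hβ a (h ▸ ⟨x, hx, rfl⟩)
  exact h4.eq_one_of_adj_of_adj_smul (μ.2.2 b a (T.symm _ _ hab) y hy x (hα a hx))
    (μ.2.2 b a (T.symm _ _ hab) y hy _ hγx)

lemma exists_homActG_le_of_quotHom_le (h4 : G.NoOrbitWalk Γ 4)
    (hconn : ∀ a b : VT, ∃ l, T.HasWalk l a b) (hedge : ∃ a b, T.Adj a b)
    {α β : HomPoset T G} (hle : quotHom T G Γ α ≤ quotHom T G Γ β) :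
    ∃ γ : Γ, homActG T G hGadj γ α ≤ β := by
  obtain ⟨a, b, hab⟩ := hedge
  obtain ⟨x₀, hx₀⟩ := α.2.1 b
  obtain ⟨y₀, hy₀, hxy⟩ := hle b ⟨x₀, hx₀, rfl⟩
  obtain ⟨γ, rfl⟩ := quot_mk_eq_quot_mk_iff.mp hxy.symm
  have key : ∀ u, Relation.ReflTransGen T.Adj a u → ∀ x ∈ α.1 u, γ • x ∈ β.1 u := by
    intro u hu
    induction hu with
    | refl => exact fun x hx => smul_mem_of_quotHom_le hGadj h4 hle (T.symm _ _ hab) hx₀ hy₀ hx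
    | tail _ hvu ih =>
      obtain ⟨z, hz⟩ := α.2.1 _
      exact fun x hx => smul_mem_of_quotHom_le hGadj h4 hle hvu hz (ih z hz) hx
  refine ⟨γ, fun u => ?_⟩
  rintro - ⟨x, hx, rfl⟩
  obtain ⟨l, hl⟩ := hconn a u
  exact key u hl.reflTransGen x hx

lemma quotHom_eq_quotHom_iff (h4 : G.NoOrbitWalk Γ 4)
    (hconn : ∀ a b : VT, ∃ l, T.HasWalk l a b) (hedge : ∃ a b, T.Adj a b)
    {α β : HomPoset T G} :
    quotHom T G Γ α = quotHom T G Γ β ↔ ∃ γ : Γ, β = homActG T G hGadj γ α := by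
  refine ⟨fun h => ?_, fun ⟨γ, hβ⟩ => hβ ▸ (quotHom_homActG hGadj γ α).symm⟩
  obtain ⟨γ, hγ⟩ := exists_homActG_le_of_quotHom_le hGadj h4 hconn hedge h.le
  obtain ⟨δ, hδ⟩ := exists_homActG_le_of_quotHom_le hGadj h4 hconn hedge h.ge
  have hδγ : δ * γ = 1 := eq_one_of_homActG_eq_of_le hGadj h4 hedge le_rfl
    ((homActG_mono hGadj δ hγ).trans hδ) (homActG_mul hGadj γ δ α).symm
  have hβ : β ≤ homActG T G hGadj γ α := by
    rw [← homActG_one hGadj β, ← mul_eq_one_comm.mp hδγ, ← homActG_mul]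
    exact homActG_mono hGadj γ hδ
  exact ⟨γ, le_antisymm hβ hγ⟩

end Action

end HomPoset

section Surjectivity

variable {Γ VT VG : Type} [Group Γ] [MulAction Γ VG] {T : SymmGraph VT} {G : SymmGraph VG}

lemma adj_of_quotGraph_adj_of_spanningTree
    (hGadj : ∀ (γ : Γ) v w, G.Adj v w → G.Adj (γ • v) (γ • w))
    {S : SimpleGraph VT} (hS : S.Connected)
    (hcyc : ∀ u w, T.Adj u w → ¬ S.Adj u w → G.NoOrbitWalk Γ (S.dist u w + 1))
    {b : VT → VG} (hb : ∀ u w, S.Adj u w → G.Adj (b u) (b w)) {u w : VT} (huw : T.Adj u w)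
    (h : (quotGraph G Γ).Adj (Quot.mk _ (b u)) (Quot.mk _ (b w))) : G.Adj (b u) (b w) := by
  by_cases hs : S.Adj u w
  · exact hb u w hs
  obtain ⟨δ, hδ⟩ := exists_adj_smul_of_quotGraph_adj hGadj h
  obtain ⟨p, hp⟩ := hS.exists_walk_length_eq_dist w u
  have hδ1 : δ = 1 := (hcyc w u (T.symm _ _ huw) fun h => hs h.symm).eq_one_of_hasWalk_of_adj
    (hp ▸ SymmGraph.hasWalk_length_of_walk hb p) hδ
  rwa [hδ1, one_smul] at hδ

def homLift (β : HomPoset T (quotGraph G Γ)) (b : VT → VG) (u : VT) : Set VG :=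
  {x | Quot.mk _ x ∈ β.1 u ∧ ∀ w, T.Adj u w → G.Adj x (b w)}

lemma image_homLift (hGadj : ∀ (γ : Γ) v w, G.Adj v w → G.Adj (γ • v) (γ • w))
    (h4 : G.NoOrbitWalk Γ 4) (hnbr : ∀ u, ∃ w, T.Adj u w) {β : HomPoset T (quotGraph G Γ)}
    {b : VT → VG} (hbβ : ∀ u, Quot.mk _ (b u) ∈ β.1 u)
    (hbT : ∀ u w, T.Adj u w → G.Adj (b u) (b w)) (u : VT) :
    Quot.mk _ '' homLift β b u = β.1 u := by
  refine Set.Subset.antisymm (fun _ ⟨x, hx, hxX⟩ => hxX ▸ hx.1) fun X hX => ?_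
  obtain ⟨w, hw⟩ := hnbr u
  obtain ⟨x, rfl, hbx⟩ :=
    exists_adj_of_quotGraph_adj hGadj (β.2.2 w u (T.symm _ _ hw) _ (hbβ w) _ hX)
  refine ⟨x, ⟨hX, fun w' hw' => ?_⟩, rfl⟩
  obtain ⟨ε, hε⟩ := exists_adj_smul_of_quotGraph_adj hGadj (β.2.2 u w' hw' _ hX _ (hbβ w'))
  rwa [h4.eq_one_of_adj_of_adj_of_adj (hbT w' u (T.symm _ _ hw')) (hbT u w hw) hbx hε,
    one_smul] at hε

lemma isMultiHom_homLift (hGadj : ∀ (γ : Γ) v w, G.Adj v w → G.Adj (γ • v) (γ • w))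
    (h4 : G.NoOrbitWalk Γ 4) (hnbr : ∀ u, ∃ w, T.Adj u w) {β : HomPoset T (quotGraph G Γ)}
    {b : VT → VG} (hbβ : ∀ u, Quot.mk _ (b u) ∈ β.1 u)
    (hbT : ∀ u w, T.Adj u w → G.Adj (b u) (b w)) : T.IsMultiHom G (homLift β b) := by
  refine ⟨fun u => ?_, fun u w huw x hx y hy => ?_⟩
  · exact Set.Nonempty.of_image (image_homLift hGadj h4 hnbr hbβ hbT u ▸ β.2.1 u)
  obtain ⟨ε, hε⟩ := exists_adj_smul_of_quotGraph_adj hGadj (β.2.2 u w huw _ hx.1 _ hy.1)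
  rwa [h4.eq_one_of_adj_of_adj_of_adj (hy.2 u (T.symm _ _ huw)) (hbT u w huw)
    (G.symm _ _ (hx.2 w huw)) hε, one_smul] at hε

theorem quotHom_surjective (hGadj : ∀ (γ : Γ) v w, G.Adj v w → G.Adj (γ • v) (γ • w))
    (h4 : G.NoOrbitWalk Γ 4) (hnbr : ∀ u, ∃ w, T.Adj u w) {S : SimpleGraph VT}
    (hS : S.IsTree) (hST : ∀ u w, S.Adj u w → T.Adj u w)
    (hcyc : ∀ u w, T.Adj u w → ¬ S.Adj u w → G.NoOrbitWalk Γ (S.dist u w + 1)) :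
    Function.Surjective (quotHom T G Γ) := by
  intro β
  choose O hO using β.2.1
  obtain ⟨b, hbO, hbS⟩ := hS.exists_lift G (quotGraph G Γ) (Quot.mk _) Quot.mk_surjective
    (fun _ _ h => exists_adj_of_quotGraph_adj hGadj h) O
    (fun u w h => β.2.2 u w (hST u w h) _ (hO u) _ (hO w))
  have hbβ : ∀ u, Quot.mk _ (b u) ∈ β.1 u := fun u => hbO u ▸ hO u
  have hbT : ∀ u w, T.Adj u w → G.Adj (b u) (b w) := fun u w huw =>
    adj_of_quotGraph_adj_of_spanningTree hGadj hS.connected hcyc hbS huw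
      (β.2.2 u w huw _ (hbβ u) _ (hbβ w))
  exact ⟨⟨homLift β b, isMultiHom_homLift hGadj h4 hnbr hbβ hbT⟩,
    Subtype.ext <| funext <| image_homLift hGadj h4 hnbr hbβ hbT⟩

end Surjectivity

theorem stmt_5_general {Γ VT VG : Type} [Group Γ] [Fintype VT] [MulAction Γ VG]
    (T : SymmGraph VT) (G : SymmGraph VG)
    (hGadj : ∀ (γ : Γ) v w, G.Adj v w → G.Adj (γ • v) (γ • w))
    -- T is connected with at least one edge
    (hTconn : ∀ a b : VT, ∃ l, T.HasWalk l a b)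
    (hedge : ∃ a b, T.Adj a b)
    -- S is a spanning tree of T
    (S : SimpleGraph VT) (hStree : S.IsTree)
    (hSsub : ∀ a b, S.Adj a b → T.Adj a b)
    -- the walk condition, with L the set of fundamental cycle lengths
    (hdisc : ∀ (v : VG) (γ : Γ), γ ≠ 1 → ∀ l : ℕ,
      ((∃ a b, T.Adj a b ∧ ¬ S.Adj a b ∧ l = S.dist a b + 1) ∨ l = 4) →
      ¬ G.HasWalk l v (γ • v)) :
    -- (a) the action on Hom(T,G) is free and strongly regular
    ((∀ (γ : Γ) (α : HomPoset T G), homActG T G hGadj γ α = α → γ = 1) ∧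
     (∀ (α β μ : HomPoset T G) (γ : Γ), α ≤ μ → β ≤ μ →
        homActG T G hGadj γ α = β → γ = 1)) ∧
    -- (b) p_T preserves rank
    (∀ α : HomPoset T G, homRank T (quotGraph G Γ) (quotHom T G Γ α) = homRank T G α) ∧
    -- (c) p_T induces an isomorphism Hom(T,G)/Γ ≅ Hom(T, G/Γ)
    (Function.Surjective (quotHom T G Γ) ∧
     (∀ α β : HomPoset T G,
        quotHom T G Γ α = quotHom T G Γ β ↔ ∃ γ : Γ, β = homActG T G hGadj γ α) ∧
     (∀ α β : HomPoset T G,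
        quotHom T G Γ α ≤ quotHom T G Γ β ↔ ∃ γ : Γ, homActG T G hGadj γ α ≤ β)) := by
  have h4 : G.NoOrbitWalk Γ 4 := fun v γ hw => by_contra fun hγ => hdisc v γ hγ 4 (Or.inr rfl) hw
  have hcyc : ∀ u w, T.Adj u w → ¬ S.Adj u w → G.NoOrbitWalk Γ (S.dist u w + 1) :=
    fun u w huw hs v γ hw => by_contra fun hγ => hdisc v γ hγ _ (Or.inl ⟨u, w, huw, hs, rfl⟩) hw
  have hnbr := SymmGraph.exists_adj_of_connected hTconn hedge
  have hreg : ∀ (α β μ : HomPoset T G) (γ : Γ), α ≤ μ → β ≤ μ →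
      homActG T G hGadj γ α = β → γ = 1 := fun _ _ _ _ =>
    eq_one_of_homActG_eq_of_le hGadj h4 hedge
  refine ⟨⟨fun γ α h => hreg α α α γ le_rfl le_rfl h, hreg⟩, homRank_quotHom h4 hnbr,
    quotHom_surjective hGadj h4 hnbr hStree hSsub hcyc,
    fun α β => quotHom_eq_quotHom_iff hGadj h4 hTconn hedge, fun α β => ⟨?_, ?_⟩⟩
  · exact exists_homActG_le_of_quotHom_le hGadj h4 hTconn hedge
  · rintro ⟨γ, hγ⟩
    exact quotHom_homActG hGadj γ α ▸ quotHom_mono hγ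

/-- under the walk condition on lengths in `L ∪ {4}` (with `L` the set
of lengths of the fundamental cycles of a spanning tree `S` of `T`), the `Γ`-action
on `Hom(T,G)` is free and strongly regular, `p_T` preserves rank, and `p_T` induces
an isomorphism `Hom(T,G)/Γ ≅ Hom(T,G/Γ)`. -/
theorem stmt_5 {Γ VT VG : Type} [Group Γ] [Fintype VT] [Fintype VG] [MulAction Γ VG]
    (T : SymmGraph VT) (G : SymmGraph VG)
    (hGadj : ∀ (γ : Γ) v w, G.Adj v w → G.Adj (γ • v) (γ • w))
    -- T is connected with at least one edge
    (hTconn : ∀ a b : VT, ∃ l, T.HasWalk l a b)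
    (hedge : ∃ a b, T.Adj a b)
    -- S is a spanning tree of T
    (S : SimpleGraph VT) (hStree : S.IsTree)
    (hSsub : ∀ a b, S.Adj a b → T.Adj a b)
    -- the walk condition, with L the set of fundamental cycle lengths
    (hdisc : ∀ (v : VG) (γ : Γ), γ ≠ 1 → ∀ l : ℕ,
      ((∃ a b, T.Adj a b ∧ ¬ S.Adj a b ∧ l = S.dist a b + 1) ∨ l = 4) →
      ¬ G.HasWalk l v (γ • v)) :
    -- (a) the action on Hom(T,G) is free and strongly regular
    ((∀ (γ : Γ) (α : HomPoset T G), homActG T G hGadj γ α = α → γ = 1) ∧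
     (∀ (α β μ : HomPoset T G) (γ : Γ), α ≤ μ → β ≤ μ →
        homActG T G hGadj γ α = β → γ = 1)) ∧
    -- (b) p_T preserves rank
    (∀ α : HomPoset T G, homRank T (quotGraph G Γ) (quotHom T G Γ α) = homRank T G α) ∧
    -- (c) p_T induces an isomorphism Hom(T,G)/Γ ≅ Hom(T, G/Γ)
    (Function.Surjective (quotHom T G Γ) ∧
     (∀ α β : HomPoset T G,
        quotHom T G Γ α = quotHom T G Γ β ↔ ∃ γ : Γ, β = homActG T G hGadj γ α) ∧
     (∀ α β : HomPoset T G,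
        quotHom T G Γ α ≤ quotHom T G Γ β ↔ ∃ γ : Γ, homActG T G hGadj γ α ≤ β)) :=
  stmt_5_general T G hGadj hTconn hedge S hStree hSsub hdisc
end

section
/- Let P be a finite poset equipped with a fixed-point-free involutive order automorphism τ, and suppose there is a strictly order-preserving function d : P → {0, 1, …, n} with d(τ(p)) = d(p) for all p ∈ P. Let K_2 carry the right Z_2-action exchanging its two vertices, and let (Chain^2(P))^1 carry the left Z_2-action induced by τ. Then there exists a graph homomorphism from K_2 ×_{Z_2} (Chain^2(P))^1 to K_{n+2}; i.e. χ(K_2 ×_{Z_2} (Chain^2(P))^1) ≤ n + 2. (This is the combinatorial form of the statement that the graph associated to the second barycentric subdivision of a regular n-dimensional cell complex with a free cellular Z_2-action is (n+2)-colorable, with P the face poset and d the dimension function.) -/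
/-- A graph: a vertex set with a symmetric adjacency relation (loops allowed). -/
structure Graph17 (V : Type) where
  Adj : V → V → Prop
  symm : ∀ x y, Adj x y → Adj y x

/-- Graph homomorphisms. -/
def Graph17.IsHom {V W : Type} (G : Graph17 V) (H : Graph17 W) (f : V → W) : Prop :=
  ∀ v w, G.Adj v w → H.Adj (f v) (f w)

/-- The complete loopless graph `K_n` on `Fin n`. -/
def completeK (n : ℕ) : Graph17 (Fin n) where
  Adj i j := i ≠ j
  symm _ _ h := h.symm

/-- The atoms (minimal elements) of a poset. -/
def MinVert (P : Type) [PartialOrder P] : Type := {x : P // ∀ y, y ≤ x → y = x}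

/-- The reflexive graph `P^1` on the atoms of `P`. -/
def oneSkel (P : Type) [PartialOrder P] : Graph17 (MinVert P) where
  Adj a b := ∃ z, a.1 ≤ z ∧ b.1 ≤ z
  symm a b h := by obtain ⟨z, h1, h2⟩ := h; exact ⟨z, h2, h1⟩

/-- The poset `Chain(P)` of nonempty finite chains of `P`, ordered by inclusion. -/
def ChainPoset (P : Type) [PartialOrder P] : Type :=
  {c : Set P // c.Nonempty ∧ c.Finite ∧ IsChain (· ≤ ·) c}

instance (P : Type) [PartialOrder P] : PartialOrder (ChainPoset P) :=
  Subtype.partialOrder _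

/-- The map `Chain(P) → Chain(Q)` induced by a monotone map, by taking images. -/
def chainMap {P Q : Type} [PartialOrder P] [PartialOrder Q] (f : P → Q) (hf : Monotone f)
    (c : ChainPoset P) : ChainPoset Q :=
  ⟨f '' c.1, c.2.1.image f, c.2.2.1.image f,
   c.2.2.2.image_of_map_rel _ _ f (fun _ _ h => hf h)⟩

theorem chainMap_mono {P Q : Type} [PartialOrder P] [PartialOrder Q] (f : P → Q)
    (hf : Monotone f) : Monotone (chainMap f hf) :=
  fun _ _ h => Set.image_mono h

theorem chainMap_invol {P : Type} [PartialOrder P] (f : P → P) (hf : Monotone f)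
    (hinv : ∀ x, f (f x) = x) (c : ChainPoset P) :
    chainMap f hf (chainMap f hf c) = c := by
  apply Subtype.ext
  show f '' (f '' c.1) = c.1
  rw [Set.image_image]
  have h : (fun x => f (f x)) = fun x => x := funext hinv
  rw [h, Set.image_id']

/-- The map induced on atoms by a monotone map with a two-sided monotone inverse. -/
def minMap {Q : Type} [PartialOrder Q] (f g : Q → Q) (hg : Monotone g)
    (hfg : ∀ x, f (g x) = x) (hgf : ∀ x, g (f x) = x) (x : MinVert Q) : MinVert Q :=
  ⟨f x.1, fun q hq => by
    have h1 : g q ≤ x.1 := by have := hg hq; rwa [hgf] at this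
    have h2 := x.2 _ h1
    have h3 : f (g q) = f x.1 := by rw [h2]
    rwa [hfg] at h3⟩

/-- The action induced by the involution `τ` on the atoms of `Chain²(P)`. -/
def chain2MinAct {P : Type} [PartialOrder P] (τ : P → P) (hmono : Monotone τ)
    (hinv : ∀ x, τ (τ x) = x) :
    MinVert (ChainPoset (ChainPoset P)) → MinVert (ChainPoset (ChainPoset P)) :=
  minMap (chainMap (chainMap τ hmono) (chainMap_mono τ hmono))
         (chainMap (chainMap τ hmono) (chainMap_mono τ hmono))
         (chainMap_mono _ _)
         (chainMap_invol _ _ (chainMap_invol τ hmono hinv))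
         (chainMap_invol _ _ (chainMap_invol τ hmono hinv))

/-- The orbit relation of the diagonal `Z₂`-action on `K₂ × (Chain²(P))^1`. -/
def rel17 {P : Type} [PartialOrder P] (τ : P → P) (hmono : Monotone τ)
    (hinv : ∀ x, τ (τ x) = x)
    (a b : Fin 2 × MinVert (ChainPoset (ChainPoset P))) : Prop :=
  a = b ∨ b = (Equiv.swap 0 1 a.1, chain2MinAct τ hmono hinv a.2)

/-- The twisted product graph `K₂ ×_{Z₂} (Chain²(P))^1`. -/
def twK2 {P : Type} [PartialOrder P] (τ : P → P) (hmono : Monotone τ)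
    (hinv : ∀ x, τ (τ x) = x) : Graph17 (Quot (rel17 τ hmono hinv)) where
  Adj X Y := ∃ a b, Quot.mk _ a = X ∧ Quot.mk _ b = Y ∧ a.1 ≠ b.1 ∧
    (oneSkel (ChainPoset (ChainPoset P))).Adj a.2 b.2
  symm X Y h := by
    obtain ⟨a, b, ha, hb, h1, h2⟩ := h
    exact ⟨b, a, hb, ha, h1.symm, (oneSkel _).symm _ _ h2⟩

/-!
Choose a sign `s : P → Bool` with `s ∘ τ = ¬s`, possible because `τ` is a fixed-point-free
involution. Color a finite chain `c` of `P` by `0` if all its elements are negative, and otherwise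
by `1 + d p` for its largest positive element `p`. The atoms of `Chain²(P)` are the singletons
`{c}`; give the vertex `[(ε, {c})]` of the twisted product the color of `c` computed with `s` on
sheet `0` and with `¬s` on sheet `1`, which is well defined because `d ∘ τ = d`. Adjacent vertices
carry comparable chains and opposite signs. Equal colors would then force either an element of the
smaller chain that is both negative and positive, or two elements of the larger chain with the same
`d`-value and opposite signs, which is impossible as `d` is injective on chains.
-/

theorem Function.Involutive.exists_bool_apply_eq_not {α : Type*} {τ : α → α}
    (hinv : Function.Involutive τ) (hfpf : ∀ p, τ p ≠ p) :
    ∃ s : α → Bool, ∀ p, s (τ p) = !s p := by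
  classical
  let := IsWellOrder.linearOrder (WellOrderingRel (α := α))
  refine ⟨fun p => decide (p < τ p), fun p => ?_⟩
  dsimp only
  rw [hinv p]
  rcases lt_or_gt_of_ne (hfpf p) with h | h <;> simp [h, h.not_gt]

theorem StrictMono.injOn_of_isChain {α β : Type*} [PartialOrder α] [Preorder β] {f : α → β}
    (hf : StrictMono f) {s : Set α} (hs : IsChain (· ≤ ·) s) : Set.InjOn f s := by
  intro p hp q hq h
  rcases hs.total hp hq with hle | hle
  · exact hle.eq_or_lt.resolve_right fun hlt => (hf hlt).ne h
  · exact (hle.eq_or_lt.resolve_right fun hlt => (hf hlt).ne h.symm).symm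

section ChainColor

variable {P : Type} [PartialOrder P] {n : ℕ}

noncomputable def chainColor (s : P → Bool) (d : P → Fin (n + 1)) (c : ChainPoset P) :
    Fin (n + 2) :=
  sSup ((fun p => if s p then (d p).succ else 0) '' c.1)

theorem chainColor_eq_zero_iff {s : P → Bool} {d : P → Fin (n + 1)} {c : ChainPoset P} :
    chainColor s d c = 0 ↔ ∀ p ∈ c.1, s p = false := by
  rw [chainColor, ← bot_eq_zero, sSup_eq_bot, Set.forall_mem_image]
  refine forall₂_congr fun p _ => ?_
  rw [bot_eq_zero]
  cases s p <;> simp [Fin.succ_ne_zero]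

theorem exists_of_chainColor_eq_succ {s : P → Bool} {d : P → Fin (n + 1)} {c : ChainPoset P}
    {k : Fin (n + 1)} (h : chainColor s d c = k.succ) : ∃ p ∈ c.1, s p = true ∧ d p = k := by
  obtain ⟨p, hp, hpk⟩ := (c.2.1.image fun p => if s p then (d p).succ else 0).csSup_mem
    (c.2.2.1.image _)
  rw [← chainColor, h] at hpk
  cases hs : s p
  · simp [hs, (Fin.succ_ne_zero k).symm] at hpk
  · exact ⟨p, hp, hs, Fin.succ_injective _ (by simpa [hs] using hpk)⟩

theorem chainColor_chainMap {s : P → Bool} {d : P → Fin (n + 1)} {τ : P → P}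
    (hmono : Monotone τ) (hdτ : ∀ p, d (τ p) = d p) (c : ChainPoset P) :
    chainColor s d (chainMap τ hmono c) = chainColor (s ∘ τ) d c := by
  simp only [chainColor, chainMap, Set.image_image, Function.comp_apply, hdτ]

theorem chainColor_ne_not_of_le {s : P → Bool} {d : P → Fin (n + 1)} (hd : StrictMono d)
    {c c' : ChainPoset P} (hle : c ≤ c') : chainColor s d c ≠ chainColor (fun p => !s p) d c' := by
  intro h
  induction hv : chainColor s d c using Fin.cases with
  | zero =>
    obtain ⟨p, hp⟩ := c.2.1
    have hneg := chainColor_eq_zero_iff.1 hv p hp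
    have hpos := chainColor_eq_zero_iff.1 (h ▸ hv) p (hle hp)
    simp [hneg] at hpos
  | succ k =>
    obtain ⟨p, hp, hsp, hdp⟩ := exists_of_chainColor_eq_succ hv
    obtain ⟨q, hq, hsq, hdq⟩ := exists_of_chainColor_eq_succ (h ▸ hv)
    have hpq : p = q := hd.injOn_of_isChain c'.2.2.2 (hle hp) hq (hdp.trans hdq.symm)
    simp [hpq ▸ hsp] at hsq

theorem chainColor_ne_not_of_le_or_le {s : P → Bool} {d : P → Fin (n + 1)} (hd : StrictMono d)
    {c c' : ChainPoset P} (h : c ≤ c' ∨ c' ≤ c) :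
    chainColor s d c ≠ chainColor (fun p => !s p) d c' := by
  rcases h with hle | hle
  · exact chainColor_ne_not_of_le hd hle
  · simpa only [Bool.not_not] using (chainColor_ne_not_of_le (s := fun p => !s p) hd hle).symm

end ChainColor

section Atoms

variable {Q : Type} [PartialOrder Q]

/-- The atoms of `Chain(Q)` are the singleton chains `{q}`; this is `q`. -/
noncomputable def MinVert.point (a : MinVert (ChainPoset Q)) : Q :=
  a.1.2.1.some

theorem MinVert.val_eq_singleton_point (a : MinVert (ChainPoset Q)) : a.1.1 = {a.point} := by
  refine Set.eq_singleton_iff_unique_mem.2 ⟨a.1.2.1.some_mem, fun x hx => ?_⟩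
  have hx_atom : a.1.1 = {x} := congrArg Subtype.val
    (a.2 ⟨{x}, Set.singleton_nonempty x, Set.finite_singleton x,
      Set.subsingleton_singleton.isChain⟩ (Set.singleton_subset_iff.2 hx)).symm
  exact (Set.mem_singleton_iff.1 (hx_atom ▸ a.1.2.1.some_mem)).symm

theorem MinVert.point_minMap_chainMap {φ : Q → Q} (hφ : Monotone φ)
    {g : ChainPoset Q → ChainPoset Q} (hg : Monotone g) (hφg : ∀ c, chainMap φ hφ (g c) = c)
    (hgφ : ∀ c, g (chainMap φ hφ c) = c) (a : MinVert (ChainPoset Q)) :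
    (minMap (chainMap φ hφ) g hg hφg hgφ a).point = φ a.point := by
  have h := (minMap (chainMap φ hφ) g hg hφg hgφ a).val_eq_singleton_point
  change φ '' a.1.1 = _ at h
  rw [a.val_eq_singleton_point, Set.image_singleton] at h
  exact (Set.singleton_eq_singleton_iff.1 h).symm

theorem MinVert.point_le_or_le_of_adj {a b : MinVert (ChainPoset Q)}
    (h : (oneSkel (ChainPoset Q)).Adj a b) : a.point ≤ b.point ∨ b.point ≤ a.point := by
  obtain ⟨z, ha, hb⟩ := h
  exact z.2.2.2.total (ha a.1.2.1.some_mem) (hb b.1.2.1.some_mem)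

end Atoms

theorem stmt_17_general {P : Type} [PartialOrder P] (n : ℕ)
    (τ : P → P) (hmono : Monotone τ) (hinv : ∀ x, τ (τ x) = x)
    (hfpf : ∀ p, τ p ≠ p)
    (d : P → Fin (n + 1)) (hd : StrictMono d) (hdτ : ∀ p, d (τ p) = d p) :
    ∃ f : Quot (rel17 τ hmono hinv) → Fin (n + 2),
      (twK2 τ hmono hinv).IsHom (completeK (n + 2)) f := by
  obtain ⟨s, hs⟩ := Function.Involutive.exists_bool_apply_eq_not hinv hfpf
  let sign (ε : Fin 2) (p : P) : Bool := if ε = 0 then s p else !s p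
  have sign_swap_comp (ε : Fin 2) : sign (Equiv.swap 0 1 ε) ∘ τ = sign ε := by
    funext p; fin_cases ε <;> simp [sign, hs]
  have sign_of_ne {ε₁ ε₂ : Fin 2} (hne : ε₁ ≠ ε₂) : sign ε₂ = fun p => !sign ε₁ p := by
    funext p; fin_cases ε₁ <;> fin_cases ε₂ <;> simp_all [sign]
  let F (a : Fin 2 × MinVert (ChainPoset (ChainPoset P))) : Fin (n + 2) :=
    chainColor (sign a.1) d a.2.point
  have F_rel : ∀ a b, rel17 τ hmono hinv a b → F a = F b := by
    rintro a b (rfl | rfl)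
    · rfl
    · simp only [F, chain2MinAct, MinVert.point_minMap_chainMap, chainColor_chainMap hmono hdτ,
        sign_swap_comp]
  refine ⟨Quot.lift F F_rel, ?_⟩
  rintro _ _ ⟨a, b, rfl, rfl, hne, hadj⟩
  change F a ≠ F b
  simp only [F, sign_of_ne hne]
  exact chainColor_ne_not_of_le_or_le hd (MinVert.point_le_or_le_of_adj hadj)

/-- if a finite poset `P` carries a fixed-point-free involutive order
automorphism `τ` and a strictly order-preserving, `τ`-invariant function
`d : P → {0,…,n}`, then `χ(K₂ ×_{Z₂} (Chain²(P))^1) ≤ n + 2`. -/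
theorem stmt_17 {P : Type} [PartialOrder P] [Fintype P] (n : ℕ)
    (τ : P → P) (hmono : Monotone τ) (hinv : ∀ x, τ (τ x) = x)
    (hfpf : ∀ p, τ p ≠ p)
    (d : P → Fin (n + 1)) (hd : StrictMono d) (hdτ : ∀ p, d (τ p) = d p) :
    ∃ f : Quot (rel17 τ hmono hinv) → Fin (n + 2),
      (twK2 τ hmono hinv).IsHom (completeK (n + 2)) f :=
  stmt_17_general n τ hmono hinv hfpf d hd hdτ
end
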